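/- For all integers x ≥ 1 and m ≥ 2x+2, twice the number of codewords of C(m,x) which start, from the left, with 1^y 0^{x+1} for some y with 2 ≤ y ≤ x+1 (Group 3) is N(m−1,x) − N(m−x−1,x). -/

import Mathlib

/-- `noForbidden m x c` says the binary word `c = (c_{m-1}, …, c_0)` contains no contiguous
subword of the form `0 1^y 0` or `1 0^y 1` for any `1 ≤ y ≤ x`. -/
def noForbidden (m x : ℕ) (c : Fin m → Bool) : Prop :=
  ∀ j y : ℕ, 1 ≤ y → y ≤ x → (h : j + y + 1 < m) →
    ¬ ((∀ k, 1 ≤ k → (hk : k ≤ y) → c ⟨j + k, by omega⟩ = ! c ⟨j, by omega⟩) ∧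
        c ⟨j + y + 1, h⟩ = c ⟨j, by omega⟩)

/-- `N(m, x)`: the cardinality of the LOCO code `C(m, x)`. -/
noncomputable def locoN (m x : ℕ) : ℕ := Nat.card {c : Fin m → Bool // noForbidden m x c}

/-- `N(k, x)` extended to integer `k` by the convention `N(k, x) = 2` for `k ≤ 1`. -/
noncomputable def Nex (k : ℤ) (x : ℕ) : ℤ := if k ≤ 1 then 2 else (locoN k.toNat x : ℤ)

/-- Strict lexicographic order on binary words, comparing bits from `c_{m-1}`
(most significant) down to `c_0`, with `0 < 1`. -/
def lexLt (m : ℕ) (d c : Fin m → Bool) : Prop :=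
  ∃ i : Fin m, d i = false ∧ c i = true ∧ ∀ j : Fin m, (i : ℕ) < (j : ℕ) → d j = c j

/-- The index `g(m, x, c)` of a codeword: the number of codewords of `C(m, x)` that
precede `c` in lexicographic order. -/
noncomputable def locoIdx (m x : ℕ) (c : Fin m → Bool) : ℕ :=
  Nat.card {d : Fin m → Bool // noForbidden m x d ∧ lexLt m d c}

/-! Every interior run of a codeword of `C(m, x)` has length at least `x + 1`, so a codeword
starting with `11` either starts with `1^{x+2}` or belongs to Group 3. Repeating the leading bit
of a codeword preserves the constraint, so the codewords of length `m` starting with `1^{t+1}`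
correspond to the codewords of length `m - t` starting with `1`, which by complementation are
half of `C(m - t, x)`. Taking `t = 1` and `t = x + 1` gives
`N(m - 1, x) = N(m - x - 1, x) + 2 * #Group 3`. -/

namespace noForbidden

variable {m x : ℕ} {c : Fin m → Bool}

lemma bnot (hc : noForbidden m x c) : noForbidden m x (fun i => !c i) :=
  fun j y hy hyx h ⟨hrun, hend⟩ =>
    hc j y hy hyx h ⟨fun k hk hky => by simpa using hrun k hk hky, by simpa using hend⟩

lemma comp_castLE {k : ℕ} (hc : noForbidden m x c) (hk : k ≤ m) :
    noForbidden k x (c ∘ Fin.castLE hk) :=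
  fun j y hy hyx h => hc j y hy hyx (by omega)

lemma repeatTop {k : ℕ} {d : Fin (k + 1) → Bool} (hd : noForbidden (k + 1) x d) :
    noForbidden m x (fun i => d ⟨min i k, by omega⟩) := by
  intro j y hy hyx h ⟨hrun, hend⟩
  by_cases hjy : j + y + 1 < k + 1
  · refine hd j y hy hyx hjy ⟨fun i hi hiy => ?_, ?_⟩
    · simpa [show j + i ≤ k by omega, show j ≤ k by omega] using hrun i hi hiy
    · simpa [show j + y + 1 ≤ k by omega, show j ≤ k by omega] using hend
  · -- both `j + y` and `j + y + 1` are clamped to `k`, yet the pattern makes them differ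
    have hlast := hrun y hy le_rfl
    simp only [show min (j + y) k = k by omega] at hlast
    simp only [show min (j + y + 1) k = k by omega] at hend
    rw [hend] at hlast
    simp at hlast

lemma apply_sub_eq {p : ℕ} (hc : noForbidden m x c) (hp : p + 1 < m) (hxp : x ≤ p)
    (hne : c ⟨p + 1, hp⟩ ≠ c ⟨p, by omega⟩) (k : ℕ) (hk : k ≤ x) :
    c ⟨p - k, by omega⟩ = c ⟨p, by omega⟩ := by
  induction k using Nat.strong_induction_on with
  | _ k ih =>
    by_contra hck
    rcases k with _ | k
    · exact hck rfl
    refine hc (p - (k + 1)) (k + 1) (by omega) hk (by omega) ⟨fun i hi hik => ?_, ?_⟩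
    · have hp : c ⟨p - (k + 1 - i), by omega⟩ = c ⟨p, by omega⟩ := ih _ (by omega) (by omega)
      rw [Bool.eq_not_of_ne hck]
      simpa only [show p - (k + 1 - i) = p - (k + 1) + i by omega, Bool.not_not] using hp
    · simp only [show p - (k + 1) + (k + 1) + 1 = p + 1 by omega]
      rw [Bool.eq_not_of_ne hck, Bool.eq_not_of_ne hne]

end noForbidden

lemma Nat.card_subtype_eq_card_and_add_card_and_not {α : Type*} [Finite α] (p q : α → Prop) :
    Nat.card {a // p a} = Nat.card {a // p a ∧ q a} + Nat.card {a // p a ∧ ¬ q a} := by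
  classical
  rw [← Nat.card_congr (Equiv.subtypeSubtypeEquivSubtypeInter p q),
    ← Nat.card_congr (Equiv.subtypeSubtypeEquivSubtypeInter p (¬ q ·)), ← Nat.card_sum]
  exact Nat.card_congr (Equiv.sumCompl _).symm

lemma locoN_one (x : ℕ) : locoN 1 x = 2 := by
  have hall (c : Fin 1 → Bool) : noForbidden 1 x c := fun j y hy _ h => by omega
  simp [locoN, Nat.card_congr (Equiv.subtypeUnivEquiv hall)]

lemma Nex_eq_locoN {k : ℤ} (hk : 1 ≤ k) (x : ℕ) : Nex k x = locoN k.toNat x := by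
  rcases hk.lt_or_eq with hk | rfl
  · simp [Nex, not_le.mpr hk]
  · simp [Nex, locoN_one]

section Counting

variable {m x : ℕ}

def StartsWithRun (c : Fin m → Bool) (t : ℕ) (b : Bool) : Prop :=
  ∀ i : Fin m, m ≤ i + t → c i = b

lemma StartsWithRun.mono {c : Fin m → Bool} {s t : ℕ} {b : Bool} (h : StartsWithRun c t b)
    (hst : s ≤ t) : StartsWithRun c s b :=
  fun i hi => h i (by omega)

lemma startsWithRun_iff {c : Fin m → Bool} {t : ℕ} {b : Bool} (ht : t ≤ m) :
    StartsWithRun c t b ↔ ∀ k (_ : k < t), c ⟨m - 1 - k, by omega⟩ = b := by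
  refine ⟨fun h k hk => h _ (by simp only; omega), fun h i hi => ?_⟩
  simpa only [show m - 1 - (m - 1 - i) = i by omega, Fin.eta] using h (m - 1 - i) (by omega)

lemma card_apply_eq_not (i : Fin m) (b : Bool) :
    Nat.card {c : Fin m → Bool // noForbidden m x c ∧ c i = !b} =
      Nat.card {c : Fin m → Bool // noForbidden m x c ∧ c i = b} :=
  Nat.card_congr
    { toFun c := ⟨fun j => !c.1 j, c.2.1.bnot, by simp [c.2.2]⟩
      invFun c := ⟨fun j => !c.1 j, c.2.1.bnot, by simp [c.2.2]⟩
      left_inv c := by simp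
      right_inv c := by simp }

lemma locoN_eq_two_mul (i : Fin m) :
    locoN m x = 2 * Nat.card {c : Fin m → Bool // noForbidden m x c ∧ c i = true} := by
  rw [locoN, Nat.card_subtype_eq_card_and_add_card_and_not _ (· i = true), two_mul,
    ← card_apply_eq_not i true]
  congr 1
  exact Nat.card_congr (Equiv.subtypeEquivRight fun c => by simp)

def startsWithRunEquiv {k : ℕ} (hk : k < m) (b : Bool) :
    {c : Fin m → Bool // noForbidden m x c ∧ StartsWithRun c (m - k) b} ≃
      {d : Fin (k + 1) → Bool // noForbidden (k + 1) x d ∧ d (Fin.last k) = b} where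
  toFun c := ⟨c.1 ∘ Fin.castLE hk, c.2.1.comp_castLE hk, c.2.2 _ (by simp; omega)⟩
  invFun d := ⟨fun i => d.1 ⟨min i k, by omega⟩, d.2.1.repeatTop,
    fun i hi => by simpa [show min (i : ℕ) k = k by omega, Fin.last] using d.2.2⟩
  left_inv c := by
    ext i
    by_cases hik : (i : ℕ) ≤ k
    · simp [hik]
    · simp only [Function.comp_apply, Fin.castLE_mk, show min (i : ℕ) k = k by omega]
      rw [c.2.2 i (by omega), c.2.2 _ (by simp only; omega)]
  right_inv d := by
    ext i
    simp [Nat.le_of_lt_succ i.2]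

lemma locoN_sub_eq_two_mul {t : ℕ} (ht : t < m) :
    locoN (m - t) x =
      2 * Nat.card {c : Fin m → Bool // noForbidden m x c ∧ StartsWithRun c (t + 1) true} := by
  obtain ⟨k, hk⟩ : ∃ k, m - t = k + 1 := ⟨m - t - 1, by omega⟩
  rw [hk, locoN_eq_two_mul (Fin.last k), show t + 1 = m - k by omega,
    Nat.card_congr (startsWithRunEquiv (by omega) true)]

lemma startsWithRun_two_and_not_iff {c : Fin m → Bool} (hc : noForbidden m x c)
    (hm : 2 * x + 1 < m) :
    (StartsWithRun c 2 true ∧ ¬ StartsWithRun c (x + 2) true) ↔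
      ∃ y, 2 ≤ y ∧ y ≤ x + 1 ∧ (∀ k, k < y → c ⟨m - 1 - k, by omega⟩ = true) ∧
        (∀ k, y ≤ k → k ≤ y + x → c ⟨m - 1 - k, by omega⟩ = false) := by
  classical
  rw [startsWithRun_iff (by omega), startsWithRun_iff (by omega)]
  constructor
  · rintro ⟨htop, hnot⟩
    push Not at hnot
    let y := Nat.find hnot
    obtain ⟨hyx, hy⟩ := Nat.find_spec hnot
    have hones (k) (hk : k < y) : c ⟨m - 1 - k, by omega⟩ = true := by
      by_contra h
      exact Nat.find_min hnot hk ⟨by omega, h⟩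
    have hy2 : 2 ≤ y := by
      by_contra h
      exact hy (htop y (by omega))
    refine ⟨y, hy2, by omega, hones, fun k hyk hky => ?_⟩
    have hchange : c ⟨m - 1 - y + 1, by omega⟩ ≠ c ⟨m - 1 - y, by omega⟩ := by
      simpa only [show m - 1 - y + 1 = m - 1 - (y - 1) by omega, hones (y - 1) (by omega)]
        using Ne.symm hy
    have hrun := hc.apply_sub_eq (by omega) (by omega) hchange (k - y) (by omega)
    simp only [show m - 1 - y - (k - y) = m - 1 - k by omega] at hrun
    rw [hrun]
    exact Bool.eq_false_iff.mpr hy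
  · rintro ⟨y, hy2, hyx, hones, hzeros⟩
    refine ⟨fun k hk => hones k (by omega), fun h => ?_⟩
    simpa [hzeros y le_rfl (by omega)] using h y (by omega)

lemma card_startsWithRun_two (hm : 2 * x + 1 < m) :
    Nat.card {c : Fin m → Bool // noForbidden m x c ∧ StartsWithRun c 2 true} =
      Nat.card {c : Fin m → Bool // noForbidden m x c ∧ StartsWithRun c (x + 2) true} +
      Nat.card {c : Fin m → Bool // noForbidden m x c ∧
          ∃ y, 2 ≤ y ∧ y ≤ x + 1 ∧
            (∀ k, k < y → c ⟨m - 1 - k, by omega⟩ = true) ∧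
            (∀ k, y ≤ k → k ≤ y + x → c ⟨m - 1 - k, by omega⟩ = false)} := by
  rw [Nat.card_subtype_eq_card_and_add_card_and_not _ (StartsWithRun · (x + 2) true)]
  congr 1
  · refine Nat.card_congr (Equiv.subtypeEquivRight fun c => ?_)
    rw [and_assoc]
    exact and_congr_right fun _ => and_iff_right_of_imp (·.mono (by omega))
  · refine Nat.card_congr (Equiv.subtypeEquivRight fun c => ?_)
    rw [and_assoc]
    exact and_congr_right (startsWithRun_two_and_not_iff · hm)

end Counting

/-- For all `x ≥ 1` and `m ≥ 2x + 2`, twice the number of codewords of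
`C(m, x)` starting from the left with `1^y 0^{x+1}` for some `2 ≤ y ≤ x + 1` (Group 3)
is `N(m - 1, x) - N(m - x - 1, x)`. -/
theorem loco_group3_card (m x : ℕ) (hm : 2 * x + 2 ≤ m) :
    2 * (Nat.card {c : Fin m → Bool // noForbidden m x c ∧
          ∃ y, 2 ≤ y ∧ y ≤ x + 1 ∧
            (∀ k, k < y → c ⟨m - 1 - k, by omega⟩ = true) ∧
            (∀ k, y ≤ k → k ≤ y + x → c ⟨m - 1 - k, by omega⟩ = false)} : ℤ)
      = Nex ((m : ℤ) - 1) x - Nex ((m : ℤ) - (x : ℤ) - 1) x := by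
  rw [Nex_eq_locoN (by omega), Nex_eq_locoN (by omega),
    show ((m : ℤ) - 1).toNat = m - 1 by omega, show ((m : ℤ) - x - 1).toNat = m - (x + 1) by omega,
    locoN_sub_eq_two_mul (by omega), locoN_sub_eq_two_mul (by omega),
    card_startsWithRun_two (by omega)]
  push_cast
  ring
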